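/- Set λ = −√6 and let γ be any real number. Define the shifted map components X̄(X,Y) = W₁(−1 + X, Y) + 1 and Ȳ(X,Y) = W₂(−1 + X, Y), which fix the origin (corresponding to the fixed point C = (−1,0)). Define ψ(Y) = Y²/2. Then: (i) the center-manifold invariance residual R(Y) = ψ(Ȳ(ψ(Y), Y)) − X̄(ψ(Y), Y) satisfies R(Y) = O(Y⁴) as Y → 0; (ii) the reduced map satisfies Ȳ(ψ(Y), Y) = Y − (3/2)·Y³ + O(Y⁵) as Y → 0. -/

import Mathlib

/-!
For λ = −√6 the coupling constant is `√(3/2) · λ = −3`, so both components of the shifted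
map are polynomials in `(X, Y)` with rational coefficients in `γ`. Substituting `X = Y²/2`
and expanding, the invariance residual is `Y⁴` times a polynomial in `Y`, and the reduced
map differs from `Y − (3/2)Y³` by the constant multiple `(3/4 − 3γ/8) Y⁵`.
-/

open Asymptotics Filter

noncomputable def f (γ lam x y : ℝ) : ℝ :=
  (3/2) * x * (2*x^2 + γ*(1 - x^2 - y^2)) - 3*x + Real.sqrt (3/2) * lam * y^2

noncomputable def g (γ lam x y : ℝ) : ℝ :=
  (3/2) * y * (2*x^2 + γ*(1 - x^2 - y^2)) - Real.sqrt (3/2) * lam * x * y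

/-- The unit-step Euler discretization map W(x,y) = (x + f(x,y), y + g(x,y)). -/
noncomputable def W (γ lam : ℝ) (p : ℝ × ℝ) : ℝ × ℝ :=
  (p.1 + f γ lam p.1 p.2, p.2 + g γ lam p.1 p.2)

/-- The map W with λ = −√6, shifted so that the fixed point C = (−1,0) is at the
origin: first component. -/
noncomputable def Xbar (γ X Y : ℝ) : ℝ := (W γ (-Real.sqrt 6) (-1 + X, Y)).1 + 1

/-- The shifted map: second component. -/
noncomputable def Ybar (γ X Y : ℝ) : ℝ := (W γ (-Real.sqrt 6) (-1 + X, Y)).2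

/-- The approximate center manifold X = ψ(Y) = Y²/2 at C for λ = −√6. -/
noncomputable def ψ (Y : ℝ) : ℝ := Y^2/2

open Topology

theorem sqrt_three_halves_mul_neg_sqrt_six : Real.sqrt (3 / 2) * -Real.sqrt 6 = -3 := by
  rw [mul_neg, ← Real.sqrt_mul (by norm_num), show (3 / 2 : ℝ) * 6 = 3 ^ 2 by norm_num,
    Real.sqrt_sq (by norm_num)]

theorem Asymptotics.isBigO_mul_of_continuousAt {α 𝕜 : Type*} [TopologicalSpace α] [NormedField 𝕜]
    {g q : α → 𝕜} {a : α} (hq : ContinuousAt q a) :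
    (fun x => g x * q x) =O[𝓝 a] g := by
  simpa only [mul_one] using (isBigO_refl g (𝓝 a)).mul (hq.tendsto.isBigO_one 𝕜)

theorem invariance_residual_eq (γ Y : ℝ) :
    ψ (Ybar γ (ψ Y) Y) - Xbar γ (ψ Y) Y =
      Y ^ 4 * ((3/4 - 3/8*γ) + (3/2 - 3/16*γ) * Y^2 + (-9/8 + 9/16*γ) * Y^4
        + (9/32 - 9/32*γ + 9/128*γ^2) * Y^6) := by
  simp only [ψ, Ybar, Xbar, W, f, g, sqrt_three_halves_mul_neg_sqrt_six]
  ring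

theorem Ybar_on_ψ_sub_eq (γ Y : ℝ) :
    Ybar γ (ψ Y) Y - (Y - (3/2) * Y^3) = Y ^ 5 * (3/4 - 3/8*γ) := by
  simp only [ψ, Ybar, W, g, sqrt_three_halves_mul_neg_sqrt_six]
  ring

/-- For λ = −√6: (i) the center-manifold invariance residual is O(Y⁴);
(ii) the reduced map is Y − (3/2)Y³ + O(Y⁵). -/
theorem stmt_15 (γ : ℝ) :
    (fun Y : ℝ => ψ (Ybar γ (ψ Y) Y) - Xbar γ (ψ Y) Y) =O[nhds (0:ℝ)]
      (fun Y : ℝ => Y^4) ∧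
    (fun Y : ℝ => Ybar γ (ψ Y) Y - (Y - (3/2)*Y^3)) =O[nhds (0:ℝ)]
      (fun Y : ℝ => Y^5) := by
  simp only [invariance_residual_eq, Ybar_on_ψ_sub_eq]
  exact ⟨isBigO_mul_of_continuousAt (by fun_prop), isBigO_mul_of_continuousAt (by fun_prop)⟩
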